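/- The probability under the uniform distribution on 2-to-1 functions that f takes prescribed distinct values at k distinct prescribed points is at least (1 − k²/(N−k)) times the corresponding probability under the uniform distribution on permutations of [N]. -/

import Mathlib

/-!
Post-composition with a permutation of `Fin N` preserves 2-to-1 functions and acts transitively
on injective `k`-tuples. So among the 2-to-1 functions `f` for which `f ∘ i` is injective, every
injective tuple `y` occurs equally often, namely a `1 / N.descFactorial k` fraction of the time;
the same holds for permutations, for which `σ ∘ i` is always injective. It remains to bound the
proportion of 2-to-1 functions for which `f ∘ i` is not injective. In a 2-to-1 function each point
has exactly one partner with the same value, and a transposition moves that partner to any other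
point, so `f a = f b` for a fraction `1 / (N - 1)` of them; the union bound over the `k (k - 1)`
ordered pairs gives at most `k ^ 2 / (N - k)`.
-/

/-- A function `f : Fin N → Fin N` is 2-to-1 if every element of its image
has exactly two preimages. -/
def TwoToOne {N : ℕ} (f : Fin N → Fin N) : Prop :=
  ∀ y : Fin N, (∃ x, f x = y) → (Finset.univ.filter fun x => f x = y).card = 2

open Finset Function Equiv
open scoped Nat

section Counting

variable {α β ι : Type*}

theorem exists_perm_apply_eq_of_injective [Finite β] {u v : ι → β} (hu : Injective u)
    (hv : Injective v) : ∃ τ : Perm β, ∀ j, τ (u j) = v j := by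
  classical
  let e : Set.range u ≃ Set.range v := (ofInjective u hu).symm.trans (ofInjective v hv)
  refine ⟨e.extendSubtype, fun j => ?_⟩
  rw [extendSubtype_apply_of_mem e _ ⟨j, rfl⟩]
  simp [e]

theorem Nat.card_eq_card_mul_card_fiber [Finite α] [Finite β] (Φ : α → β) (b₀ : β)
    (h : ∀ b, Nat.card {a // Φ a = b} = Nat.card {a // Φ a = b₀}) :
    Nat.card α = Nat.card β * Nat.card {a // Φ a = b₀} := by
  have := Fintype.ofFinite β
  rw [← Nat.card_congr (sigmaFiberEquiv Φ), Nat.card_sigma, sum_congr rfl fun b _ => h b,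
    sum_const, Finset.card_univ, smul_eq_mul, Nat.card_eq_fintype_card (α := β)]

theorem Nat.card_embedding [Finite ι] [Finite β] :
    Nat.card (ι ↪ β) = (Nat.card β).descFactorial (Nat.card ι) := by
  classical
  have := Fintype.ofFinite ι
  have := Fintype.ofFinite β
  simp only [Nat.card_eq_fintype_card, Fintype.card_embedding_eq]

variable {p : (α → β) → Prop}

theorem card_apply_eq_congr [Finite β] (hp : ∀ (τ : Perm β) f, p (τ ∘ f) ↔ p f) (u : ι → α)
    {v w : ι → β} (hv : Injective v) (hw : Injective w) :
    Nat.card {f // p f ∧ ∀ j, f (u j) = v j} = Nat.card {f // p f ∧ ∀ j, f (u j) = w j} := by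
  obtain ⟨τ, hτ⟩ := exists_perm_apply_eq_of_injective hv hw
  refine Nat.card_congr (subtypeEquiv ((Equiv.refl α).arrowCongr τ) fun f => ?_)
  change _ ↔ p (τ ∘ f) ∧ ∀ j, τ (f (u j)) = w j
  simp only [hp, ← hτ, τ.apply_eq_iff_eq]

theorem card_injective_comp_eq_descFactorial_mul [Finite α] [Finite β] [Finite ι]
    (hp : ∀ (τ : Perm β) f, p (τ ∘ f) ↔ p f) (u : ι → α) {v : ι → β} (hv : Injective v) :
    Nat.card {f // p f ∧ Injective (f ∘ u)} =
      (Nat.card β).descFactorial (Nat.card ι) * Nat.card {f // p f ∧ ∀ j, f (u j) = v j} := by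
  let Φ : {f // p f ∧ Injective (f ∘ u)} → (ι ↪ β) := fun f => ⟨f.1 ∘ u, f.2.2⟩
  have hfiber (e : ι ↪ β) :
      Nat.card {f // Φ f = e} = Nat.card {f // p f ∧ ∀ j, f (u j) = e j} :=
    Nat.card_congr
      { toFun f := ⟨f.1.1, f.1.2.1, fun j => DFunLike.congr_fun f.2 j⟩
        invFun f := ⟨⟨f.1, f.2.1, by convert e.injective; exact funext f.2.2⟩,
          DFunLike.ext _ _ f.2.2⟩ }
  rw [Nat.card_eq_card_mul_card_fiber Φ ⟨v, hv⟩ fun e => ?_, hfiber, Nat.card_embedding]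
  · rfl
  rw [hfiber, hfiber]
  exact card_apply_eq_congr hp u e.injective hv

theorem card_perm_apply_eq_mul_descFactorial [Finite β] [Finite ι] {u v : ι → β}
    (hu : Injective u) (hv : Injective v) :
    Nat.card {σ : Perm β // ∀ j, σ (u j) = v j} * (Nat.card β).descFactorial (Nat.card ι) =
      (Nat.card β)! := by
  have h := card_injective_comp_eq_descFactorial_mul (p := Bijective)
    (fun τ f => comp_bijective f τ) u hv
  have hall : Nat.card {f : β → β // Bijective f ∧ Injective (f ∘ u)} = (Nat.card β)! := by
    rw [← Nat.card_perm, ← Nat.card_congr bijectiveEquiv]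
    exact Nat.card_congr (subtypeEquivRight fun f => and_iff_left_of_imp fun hf => hf.1.comp hu)
  have hfix : Nat.card {f : β → β // Bijective f ∧ ∀ j, f (u j) = v j} =
      Nat.card {σ : Perm β // ∀ j, σ (u j) = v j} :=
    Nat.card_congr
      { toFun f := ⟨ofBijective f.1 f.2.1, f.2.2⟩
        invFun σ := ⟨σ, σ.1.bijective, σ.2⟩
        right_inv _ := Subtype.ext (Equiv.ext fun _ => rfl) }
  rw [← hall, h, hfix, mul_comm]

end Counting

section TwoToOne

variable {N : ℕ}

theorem twoToOne_perm_comp_iff (τ : Perm (Fin N)) {f : Fin N → Fin N} :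
    TwoToOne (τ ∘ f) ↔ TwoToOne f := by
  simp only [TwoToOne, comp_apply, ← eq_symm_apply]
  exact (τ.symm.surjective.forall (p := fun y => (∃ x, f x = y) → #{x | f x = y} = 2)).symm

theorem twoToOne_comp_perm_iff (τ : Perm (Fin N)) {f : Fin N → Fin N} :
    TwoToOne (f ∘ τ) ↔ TwoToOne f := by
  refine forall_congr' fun z => imp_congr (τ.surjective.exists (p := (f · = z))).symm ?_
  rw [card_equiv τ (t := {x | f x = z}) (by simp)]

theorem exists_twoToOne (hN : Even N) : ∃ f : Fin N → Fin N, TwoToOne f := by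
  obtain ⟨m, rfl⟩ := hN
  refine ⟨fun x => ⟨2 * (x.val / 2), by omega⟩, fun z ⟨x, hx⟩ => ?_⟩
  have hz : z.val = 2 * (x.val / 2) := by rw [← hx]
  have hfiber :
      (univ.filter fun w : Fin (m + m) => (⟨2 * (w.val / 2), by omega⟩ : Fin (m + m)) = z) =
        {z, ⟨z.val + 1, by omega⟩} := by
    ext w
    simp only [mem_filter, mem_univ, true_and, mem_insert, mem_singleton, Fin.ext_iff]
    omega
  rw [hfiber, card_pair (by simp [Fin.ext_iff])]

theorem card_twoToOne_apply_eq_mul {a b : Fin N} (hab : a ≠ b) :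
    Nat.card {f : Fin N → Fin N // TwoToOne f ∧ f b = f a} * (N - 1) =
      Nat.card {f : Fin N → Fin N // TwoToOne f} := by
  classical
  set T := univ.filter fun f : Fin N → Fin N => TwoToOne f
  -- double count the pairs `(f, c)` with `c ≠ a` and `f c = f a`
  have hpartner (f) (hf : f ∈ T) : #{c ∈ univ.erase a | f c = f a} = 1 := by
    rw [filter_erase, card_erase_of_mem (by simp), (mem_filter.1 hf).2 _ ⟨a, rfl⟩]
  have hswap (c) (hc : c ∈ univ.erase a) : #{f ∈ T | f c = f a} = #{f ∈ T | f b = f a} := by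
    refine card_equiv ((swap b c).arrowCongr (Equiv.refl _)) fun f => ?_
    change _ ↔ f ∘ swap b c ∈ _
    simp only [T, mem_filter, mem_univ, true_and, twoToOne_comp_perm_iff, comp_apply,
      swap_apply_left, swap_apply_of_ne_of_ne hab (mem_erase.1 hc).1.symm]
  calc Nat.card {f : Fin N → Fin N // TwoToOne f ∧ f b = f a} * (N - 1)
      = ∑ c ∈ univ.erase a, #{f ∈ T | f c = f a} := by
        rw [sum_congr rfl hswap, sum_const, card_erase_of_mem (mem_univ a), card_univ,
          Fintype.card_fin, smul_eq_mul, mul_comm, Nat.card_eq_fintype_card,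
          Fintype.card_subtype, filter_filter]
    _ = ∑ f ∈ T, #{c ∈ univ.erase a | f c = f a} :=
        (sum_card_bipartiteAbove_eq_sum_card_bipartiteBelow _).symm
    _ = Nat.card {f : Fin N → Fin N // TwoToOne f} := by
        rw [sum_congr rfl hpartner, sum_const, smul_eq_mul, mul_one, Nat.card_eq_fintype_card,
          Fintype.card_subtype]

end TwoToOne

section TwoToOneBounds

variable {N k : ℕ} {i : Fin k → Fin N}

theorem card_twoToOne_not_injective_comp_mul_le (hi : Injective i) :
    Nat.card {f : Fin N → Fin N // TwoToOne f ∧ ¬Injective (f ∘ i)} * (N - k) ≤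
      k ^ 2 * Nat.card {f : Fin N → Fin N // TwoToOne f} := by
  classical
  set T := univ.filter fun f : Fin N → Fin N => TwoToOne f
  set pairs := (univ : Finset (Fin k)).offDiag
  have hunion :
      #{f ∈ T | ¬Injective (f ∘ i)} ≤ ∑ p ∈ pairs, #{f ∈ T | f (i p.2) = f (i p.1)} := by
    refine (card_le_card fun f hf => ?_).trans card_biUnion_le
    obtain ⟨hfT, hf⟩ := mem_filter.1 hf
    obtain ⟨j, j', hjj', hne⟩ := not_injective_iff.1 hf
    exact mem_biUnion.2 ⟨(j, j'), by simp [pairs, hne], mem_filter.2 ⟨hfT, hjj'.symm⟩⟩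
  have hpair (p) (hp : p ∈ pairs) : #{f ∈ T | f (i p.2) = f (i p.1)} * (N - k) ≤ #T := by
    have hne : i p.1 ≠ i p.2 := hi.ne (mem_offDiag.1 hp).2.2
    calc #{f ∈ T | f (i p.2) = f (i p.1)} * (N - k)
        ≤ #{f ∈ T | f (i p.2) = f (i p.1)} * (N - 1) := by
          gcongr; exact p.1.pos
      _ = #T := by
        simpa [T, Nat.card_eq_fintype_card, Fintype.card_subtype, filter_filter] using
          card_twoToOne_apply_eq_mul hne
  calc Nat.card {f : Fin N → Fin N // TwoToOne f ∧ ¬Injective (f ∘ i)} * (N - k)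
      ≤ ∑ p ∈ pairs, #{f ∈ T | f (i p.2) = f (i p.1)} * (N - k) := by
        rw [← sum_mul, Nat.card_eq_fintype_card, Fintype.card_subtype, ← filter_filter]
        exact Nat.mul_le_mul_right _ hunion
    _ ≤ #pairs * #T := by
        rw [← smul_eq_mul, ← sum_const]
        exact sum_le_sum hpair
    _ ≤ k ^ 2 * Nat.card {f : Fin N → Fin N // TwoToOne f} := by
        rw [Nat.card_eq_fintype_card, Fintype.card_subtype, offDiag_card, card_univ,
          Fintype.card_fin, sq]
        gcongr
        exact Nat.sub_le _ _

theorem one_sub_sq_div_mul_card_twoToOne_le (hk : k < N) (hi : Injective i) :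
    (1 - (k : ℝ) ^ 2 / (N - k)) * Nat.card {f : Fin N → Fin N // TwoToOne f} ≤
      Nat.card {f : Fin N → Fin N // TwoToOne f ∧ Injective (f ∘ i)} := by
  classical
  have hsplit : Nat.card {f : Fin N → Fin N // TwoToOne f ∧ Injective (f ∘ i)} +
      Nat.card {f : Fin N → Fin N // TwoToOne f ∧ ¬Injective (f ∘ i)} =
        Nat.card {f : Fin N → Fin N // TwoToOne f} := by
    simp only [Nat.card_eq_fintype_card, Fintype.card_subtype, ← filter_filter]
    exact card_filter_add_card_filter_not _
  have hNk : (0 : ℝ) < N - k := sub_pos.2 (by exact_mod_cast hk)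
  have hbad : (Nat.card {f : Fin N → Fin N // TwoToOne f ∧ ¬Injective (f ∘ i)} : ℝ) ≤
      k ^ 2 / (N - k) * Nat.card {f : Fin N → Fin N // TwoToOne f} := by
    rw [div_mul_eq_mul_div, le_div_iff₀ hNk, ← Nat.cast_sub hk.le]
    exact_mod_cast card_twoToOne_not_injective_comp_mul_le hi
  rw [← hsplit] at hbad ⊢
  push_cast at hbad ⊢
  linarith

end TwoToOneBounds

theorem stmt5_general (N k : ℕ) (hEven : Even N) (hk : k < N / 2)
    (i : Fin k → Fin N) (hi : Function.Injective i)
    (y : Fin k → Fin N) (hy : Function.Injective y) :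
    (1 - (k : ℝ) ^ 2 / ((N : ℝ) - k)) *
        ((Nat.card {σ : Equiv.Perm (Fin N) // ∀ j, σ (i j) = y j} : ℝ) /
          (Nat.card (Equiv.Perm (Fin N)) : ℝ)) ≤
      (Nat.card {f : Fin N → Fin N // TwoToOne f ∧ ∀ j, f (i j) = y j} : ℝ) /
        (Nat.card {f : Fin N → Fin N // TwoToOne f} : ℝ) := by
  have hkN : k < N := hk.trans_le (Nat.div_le_self N 2)
  obtain ⟨f₀, hf₀⟩ := exists_twoToOne hEven
  have hA : 0 < Nat.card {f : Fin N → Fin N // TwoToOne f} :=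
    Nat.card_pos_iff.2 ⟨⟨⟨f₀, hf₀⟩⟩, inferInstance⟩
  have hperm := card_perm_apply_eq_mul_descFactorial hi hy
  have htwo := card_injective_comp_eq_descFactorial_mul twoToOne_perm_comp_iff i hy
  have hlow := one_sub_sq_div_mul_card_twoToOne_le hkN hi
  simp only [Nat.card_fin] at hperm htwo
  have hP : 0 < Nat.card {σ : Perm (Fin N) // ∀ j, σ (i j) = y j} :=
    Nat.pos_of_mul_pos_right (hperm ▸ N.factorial_pos)
  have hd : 0 < N.descFactorial k := Nat.descFactorial_pos.2 hkN.le
  rw [htwo, Nat.cast_mul] at hlow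
  rw [Nat.card_perm, Nat.card_fin, ← hperm, Nat.cast_mul, div_mul_cancel_left₀ (by positivity),
    le_div_iff₀ (by exact_mod_cast hA), mul_right_comm, mul_inv_le_iff₀ (by exact_mod_cast hd)]
  linarith

theorem stmt5 (N k : ℕ) (hN : 0 < N) (hEven : Even N) (hk : k < N / 2)
    (i : Fin k → Fin N) (hi : Function.Injective i)
    (y : Fin k → Fin N) (hy : Function.Injective y) :
    (1 - (k : ℝ) ^ 2 / ((N : ℝ) - k)) *
        ((Nat.card {σ : Equiv.Perm (Fin N) // ∀ j, σ (i j) = y j} : ℝ) /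
          (Nat.card (Equiv.Perm (Fin N)) : ℝ)) ≤
      (Nat.card {f : Fin N → Fin N // TwoToOne f ∧ ∀ j, f (i j) = y j} : ℝ) /
        (Nat.card {f : Fin N → Fin N // TwoToOne f} : ℝ) :=
  stmt5_general N k hEven hk i hi y hy
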